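/- With g and X̃ as above, for any 0 ≤ s ≤ s + t ≤ g(x̄): E[Ỹ² · 1{s < X̃ < s + t}] = t. That is, the conditional-variance-weighted measure of any interval under the time change equals its length. -/

import Mathlib

/-!
Taking `s = (u, v]` in `hcond` shows that `∫_u^v σ_Y² f_X ≥ 0` whenever `u ≤ v`. Hence the time
change `g` is nondecreasing and continuous on `[x̲, x̄]`, and outside `[x̲, x̄]` it never enters
`(s, s + t)`. So `g⁻¹(s, s + t)` is an interval `(c, d)` with `g c = s` and `g d = s + t`, and
`hcond` applied to `(c, d)` gives `E[Ỹ² · 1{s < X̃ < s + t}] = ∫_c^d σ_Y² f_X = g d - g c = t`.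
-/

open MeasureTheory Set

theorem ContinuousOn.exists_preimage_Ioo_eq_Ioo_of_monotoneOn
    {α β : Type*} [ConditionallyCompleteLinearOrder α] [TopologicalSpace α] [OrderTopology α]
    [DenselyOrdered α] [LinearOrder β] [TopologicalSpace β] [OrderClosedTopology β]
    {f : α → β} {l r : α} {y₁ y₂ : β} (hlr : l ≤ r) (hf : ContinuousOn f (Icc l r))
    (hmono : MonotoneOn f (Icc l r)) (hl : f l ≤ y₁) (hy : y₁ < y₂) (hr : y₂ ≤ f r)
    (hout : ∀ x ∉ Icc l r, f x ∉ Ioo y₁ y₂) :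
    ∃ a ∈ Icc l r, ∃ b ∈ Icc l r, a ≤ b ∧ f a = y₁ ∧ f b = y₂ ∧ f ⁻¹' Ioo y₁ y₂ = Ioo a b := by
  set below := Icc l r ∩ f ⁻¹' Iic y₁
  set above := Icc l r ∩ f ⁻¹' Ici y₂
  have below_bdd : BddAbove below := bddAbove_Icc.mono inter_subset_left
  have above_bdd : BddBelow above := bddBelow_Icc.mono inter_subset_left
  have ha : sSup below ∈ below :=
    (hf.preimage_isClosed_of_isClosed isClosed_Icc isClosed_Iic).csSup_mem
      ⟨l, left_mem_Icc.2 hlr, hl⟩ below_bdd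
  have hb : sInf above ∈ above :=
    (hf.preimage_isClosed_of_isClosed isClosed_Icc isClosed_Ici).csInf_mem
      ⟨r, right_mem_Icc.2 hlr, hr⟩ above_bdd
  obtain ⟨c₁, hc₁, hfc₁⟩ := intermediate_value_Icc hlr hf ⟨hl, hy.le.trans hr⟩
  obtain ⟨c₂, hc₂, hfc₂⟩ := intermediate_value_Icc hlr hf ⟨hl.trans hy.le, hr⟩
  have hfa : f (sSup below) = y₁ := le_antisymm ha.2 <|
    hfc₁ ▸ hmono hc₁ ha.1 (le_csSup below_bdd ⟨hc₁, hfc₁.le⟩)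
  have hfb : f (sInf above) = y₂ := le_antisymm
    (hfc₂ ▸ hmono hb.1 hc₂ (csInf_le above_bdd ⟨hc₂, hfc₂.ge⟩)) hb.2
  refine ⟨_, ha.1, _, hb.1, ?_, hfa, hfb, ?_⟩
  · by_contra! hba
    exact not_lt_of_ge (hmono hb.1 ha.1 hba.le) (hfa ▸ hfb ▸ hy)
  ext x
  constructor
  · intro hx
    have hxI : x ∈ Icc l r := by_contra fun h => hout x h hx
    refine ⟨lt_of_not_ge fun hxa => ?_, lt_of_not_ge fun hbx => ?_⟩
    · exact not_lt_of_ge (hmono hxI ha.1 hxa) (hfa ▸ hx.1)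
    · exact not_lt_of_ge (hmono hb.1 hxI hbx) (hfb ▸ hx.2)
  · intro hx
    have hxI : x ∈ Icc l r := ⟨ha.1.1.trans hx.1.le, hx.2.le.trans hb.1.2⟩
    refine ⟨lt_of_not_ge fun hfx => ?_, lt_of_not_ge fun hfx => ?_⟩
    · exact hx.1.not_ge (le_csSup below_bdd ⟨hxI, hfx⟩)
    · exact hx.2.not_ge (csInf_le above_bdd ⟨hxI, hfx⟩)

theorem IntervalIntegrable.left_of_mem_Icc {E : Type*} [NormedAddCommGroup E] {f : ℝ → E}
    {μ : Measure ℝ} {a b w : ℝ} (hf : IntervalIntegrable f μ a b) (hw : w ∈ Icc a b) :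
    IntervalIntegrable f μ a w :=
  hf.mono_set (uIcc_subset_uIcc left_mem_uIcc (Icc_subset_uIcc hw))

section Primitive

variable {F : ℝ → ℝ} {a b : ℝ}

theorem primitive_nonpos_of_le (hF : ∀ u v, u ≤ v → 0 ≤ ∫ x in u..v, F x) {x : ℝ}
    (hx : x ≤ a) : ∫ y in a..x, F y ≤ 0 := by
  rw [intervalIntegral.integral_symm]
  exact neg_nonpos.2 (hF x a hx)

theorem primitive_monotoneOn (hF : ∀ u v, u ≤ v → 0 ≤ ∫ x in u..v, F x)
    (hint : IntervalIntegrable F volume a b) :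
    MonotoneOn (fun u => ∫ x in a..u, F x) (Icc a b) := by
  intro u hu v hv huv
  have hau := hint.left_of_mem_Icc hu
  have := intervalIntegral.integral_add_adjacent_intervals hau
    (hau.symm.trans (hint.left_of_mem_Icc hv))
  linarith [hF u v huv]

theorem primitive_notMem_Ioo_of_notMem_Icc (hF : ∀ u v, u ≤ v → 0 ≤ ∫ x in u..v, F x)
    (hint : IntervalIntegrable F volume a b) {s s' x : ℝ} (hs : 0 ≤ s)
    (hs' : s' ≤ ∫ y in a..b, F y) (hx : x ∉ Icc a b) : ∫ y in a..x, F y ∉ Ioo s s' := by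
  rintro ⟨hlow, hhigh⟩
  rcases not_and_or.1 hx with hxa | hbx
  · linarith [primitive_nonpos_of_le hF (le_of_not_ge hxa)]
  by_cases hintx : IntervalIntegrable F volume a x
  · have := intervalIntegral.integral_add_adjacent_intervals hint (hint.symm.trans hintx)
    linarith [hF b x (le_of_not_ge hbx)]
  · -- junk value of a non-integrable interval integral
    rw [intervalIntegral.integral_undef hintx] at hlow
    linarith

theorem exists_preimage_primitive_Ioo_eq_Ioo (hF : ∀ u v, u ≤ v → 0 ≤ ∫ x in u..v, F x)
    {s t : ℝ} (hs : 0 ≤ s) (ht : 0 < t) (hst : s + t ≤ ∫ x in a..b, F x) :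
    ∃ c d, (fun u => ∫ x in a..u, F x) ⁻¹' Ioo s (s + t) = Ioo c d ∧ ∫ x in Ioo c d, F x = t := by
  have hpos : 0 < ∫ x in a..b, F x := by linarith
  have hab : a ≤ b := le_of_not_gt fun hba => (primitive_nonpos_of_le hF hba.le).not_gt hpos
  have hint := intervalIntegral.intervalIntegrable_of_integral_ne_zero hpos.ne'
  have hcont : ContinuousOn (fun u => ∫ x in a..u, F x) (Icc a b) := by
    simpa only [uIcc_of_le hab] using
      intervalIntegral.continuousOn_primitive_interval' hint left_mem_uIcc
  obtain ⟨c, hc, d, hd, hcd, hgc, hgd, hpre⟩ :=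
    hcont.exists_preimage_Ioo_eq_Ioo_of_monotoneOn hab (primitive_monotoneOn hF hint)
      (by simpa using hs) (by linarith) hst
      fun x hx => primitive_notMem_Ioo_of_notMem_Icc hF hint hs hst hx
  refine ⟨c, d, hpre, ?_⟩
  rw [← integral_Ioc_eq_integral_Ioo, ← intervalIntegral.integral_of_le hcd,
    ← intervalIntegral.integral_interval_sub_left (hint.left_of_mem_Icc hd)
      (hint.left_of_mem_Icc hc), hgc, hgd]
  ring

end Primitive

theorem stmt1_general {Ω : Type*} [MeasurableSpace Ω] (μ : Measure Ω)
    (X Yt : Ω → ℝ)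
    (fX σY2 : ℝ → ℝ)
    (xl xu : ℝ)
    (hcond : ∀ s : Set ℝ, MeasurableSet s →
      ∫ ω, (Yt ω) ^ 2 * Set.indicator s (fun _ => (1 : ℝ)) (X ω) ∂μ =
        ∫ x in s, σY2 x * fX x) :
    ∀ s t : ℝ, 0 ≤ s → 0 ≤ t → s + t ≤ ∫ x in xl..xu, σY2 x * fX x →
      ∫ ω, (Yt ω) ^ 2 *
          Set.indicator (Set.Ioo s (s + t)) (fun _ => (1 : ℝ))
            (∫ x in xl..(X ω), σY2 x * fX x) ∂μ = t := by
  intro s t hs ht hst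
  rcases ht.eq_or_lt with rfl | ht
  · simp
  have hF (u v : ℝ) (huv : u ≤ v) : 0 ≤ ∫ x in u..v, σY2 x * fX x := by
    rw [intervalIntegral.integral_of_le huv, ← hcond _ measurableSet_Ioc]
    exact integral_nonneg fun ω =>
      mul_nonneg (sq_nonneg _) (indicator_nonneg (fun _ _ => zero_le_one) _)
  obtain ⟨c, d, hpre, hcd⟩ := exists_preimage_primitive_Ioo_eq_Ioo hF hs ht hst
  change ∫ ω, Yt ω ^ 2 * ((fun u => ∫ x in xl..u, σY2 x * fX x) ⁻¹' Ioo s (s + t)).indicator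
    (fun _ => (1 : ℝ)) (X ω) ∂μ = t
  rw [hpre, hcond _ measurableSet_Ioo, hcd]

/-- With the time change `g(u) = ∫_{x̲}^u σ_Y²(x) f_X(x) dx` and `X̃ = g(X)`: for any
`0 ≤ s ≤ s + t ≤ g(x̄)`, the conditional-variance-weighted measure of the interval equals its
length: `E[Ỹ² · 1{s < X̃ < s + t}] = t`. -/
theorem stmt1 {Ω : Type*} [MeasurableSpace Ω] (μ : Measure Ω) [IsProbabilityMeasure μ]
    (X Yt : Ω → ℝ) (hX : Measurable X) (hYt : Measurable Yt)
    (fX σY2 : ℝ → ℝ) (hfX : Measurable fX) (hσY2 : Measurable σY2)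
    (xl xu : ℝ) (hxlu : xl < xu)
    (hdens : ∀ s : Set ℝ, MeasurableSet s → (μ (X ⁻¹' s)).toReal = ∫ x in s, fX x)
    (cl cu : ℝ) (hcl : 0 < cl) (hbound : ∀ x, cl ≤ σY2 x ∧ σY2 x ≤ cu)
    (hcond : ∀ s : Set ℝ, MeasurableSet s →
      ∫ ω, (Yt ω) ^ 2 * Set.indicator s (fun _ => (1 : ℝ)) (X ω) ∂μ =
        ∫ x in s, σY2 x * fX x) :
    ∀ s t : ℝ, 0 ≤ s → 0 ≤ t → s + t ≤ ∫ x in xl..xu, σY2 x * fX x →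
      ∫ ω, (Yt ω) ^ 2 *
          Set.indicator (Set.Ioo s (s + t)) (fun _ => (1 : ℝ))
            (∫ x in xl..(X ω), σY2 x * fX x) ∂μ = t :=
  stmt1_general μ X Yt fX σY2 xl xu hcond
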